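/- Let α ∈ ℝ, let b : ℝ → ℝ be continuously differentiable, and let φ : ℝ² → ℝ, φ = φ(t,s), be twice continuously differentiable with φ_s(t,s) > 0 for all (t,s), satisfying the one-dimensional SMHD equation in Lagrangian coordinates φ_tt − α² φ_ss + ∂_s(1/φ_s²) − b′(φ) = 0. Then the local conservation law of energy holds identically: ∂_t( (φ_t² + α² φ_s²)/2 + 1/φ_s − b(φ) ) + ∂_s( φ_t/φ_s² − α² φ_t φ_s ) = 0 for all (t,s). -/

import Mathlib

/-!
Write u = φ_t and v = φ_s. For every C² map φ with v ≠ 0 the differentiated energy and flux satisfy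
∂_t E + ∂_s F = u · (u_t − α² v_s + ∂_s(v⁻²) − b′(φ)),
because the terms α² v v_t − v_t / v² of ∂_t E cancel the terms u_s / v² − α² u_s v of ∂_s F once
v_t = u_s (symmetry of the second derivative of φ). The SMHD equation makes the right-hand side vanish.
-/

/-- Partial derivative with respect to the first (time) variable. -/
noncomputable def pt (f : ℝ → ℝ → ℝ) (t s : ℝ) : ℝ := deriv (fun t' => f t' s) t

/-- Partial derivative with respect to the second (space) variable. -/
noncomputable def ps (f : ℝ → ℝ → ℝ) (t s : ℝ) : ℝ := deriv (fun s' => f t s') s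

open Function

section PartialDerivatives

variable {f : ℝ → ℝ → ℝ} {t s : ℝ}

theorem hasDerivAt_fderiv_apply_fst (hf : DifferentiableAt ℝ (uncurry f) (t, s)) :
    HasDerivAt (fun t' => f t' s) (fderiv ℝ (uncurry f) (t, s) (1, 0)) t := by
  simpa [comp_def] using
    hf.hasFDerivAt.comp_hasDerivAt t ((hasDerivAt_id t).prodMk (hasDerivAt_const t s))

theorem hasDerivAt_fderiv_apply_snd (hf : DifferentiableAt ℝ (uncurry f) (t, s)) :
    HasDerivAt (fun s' => f t s') (fderiv ℝ (uncurry f) (t, s) (0, 1)) s := by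
  simpa [comp_def] using
    hf.hasFDerivAt.comp_hasDerivAt s ((hasDerivAt_const s t).prodMk (hasDerivAt_id s))

theorem pt_eq_fderiv_apply (hf : DifferentiableAt ℝ (uncurry f) (t, s)) :
    pt f t s = fderiv ℝ (uncurry f) (t, s) (1, 0) :=
  (hasDerivAt_fderiv_apply_fst hf).deriv

theorem ps_eq_fderiv_apply (hf : DifferentiableAt ℝ (uncurry f) (t, s)) :
    ps f t s = fderiv ℝ (uncurry f) (t, s) (0, 1) :=
  (hasDerivAt_fderiv_apply_snd hf).deriv

theorem hasDerivAt_pt (hf : DifferentiableAt ℝ (uncurry f) (t, s)) :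
    HasDerivAt (fun t' => f t' s) (pt f t s) t :=
  pt_eq_fderiv_apply hf ▸ hasDerivAt_fderiv_apply_fst hf

theorem hasDerivAt_ps (hf : DifferentiableAt ℝ (uncurry f) (t, s)) :
    HasDerivAt (fun s' => f t s') (ps f t s) s :=
  ps_eq_fderiv_apply hf ▸ hasDerivAt_fderiv_apply_snd hf

theorem uncurry_pt_eq_fderiv (hf : Differentiable ℝ (uncurry f)) :
    uncurry (pt f) = fun p => fderiv ℝ (uncurry f) p (1, 0) :=
  funext fun p => pt_eq_fderiv_apply (hf p)

theorem uncurry_ps_eq_fderiv (hf : Differentiable ℝ (uncurry f)) :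
    uncurry (ps f) = fun p => fderiv ℝ (uncurry f) p (0, 1) :=
  funext fun p => ps_eq_fderiv_apply (hf p)

variable {m n : WithTop ℕ∞}

theorem ContDiff.uncurry_pt (hf : ContDiff ℝ m (uncurry f)) (hmn : n + 1 ≤ m) :
    ContDiff ℝ n (uncurry (pt f)) := by
  rw [uncurry_pt_eq_fderiv (hf.differentiable (ne_bot_of_le_ne_bot (by simp) hmn))]
  exact (hf.fderiv_right hmn).clm_apply contDiff_const

theorem ContDiff.uncurry_ps (hf : ContDiff ℝ m (uncurry f)) (hmn : n + 1 ≤ m) :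
    ContDiff ℝ n (uncurry (ps f)) := by
  rw [uncurry_ps_eq_fderiv (hf.differentiable (ne_bot_of_le_ne_bot (by simp) hmn))]
  exact (hf.fderiv_right hmn).clm_apply contDiff_const

theorem pt_ps_eq_ps_pt (hf : ContDiff ℝ 2 (uncurry f)) :
    pt (ps f) t s = ps (pt f) t s := by
  have hdf : Differentiable ℝ (uncurry f) := hf.differentiable (by norm_num)
  have hd2 : DifferentiableAt ℝ (fderiv ℝ (uncurry f)) (t, s) :=
    (hf.fderiv_right le_rfl).differentiable one_ne_zero _
  rw [pt_eq_fderiv_apply ((hf.uncurry_ps le_rfl).differentiable one_ne_zero _),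
    ps_eq_fderiv_apply ((hf.uncurry_pt le_rfl).differentiable one_ne_zero _),
    uncurry_ps_eq_fderiv hdf, uncurry_pt_eq_fderiv hdf,
    fderiv_clm_apply hd2 (differentiableAt_const _), fderiv_clm_apply hd2 (differentiableAt_const _)]
  simpa using hf.contDiffAt.isSymmSndFDerivAt (by simp) (1, 0) (0, 1)

end PartialDerivatives

section SMHD

variable (α : ℝ) (b : ℝ → ℝ) (φ : ℝ → ℝ → ℝ)

noncomputable def smhdResidual (t s : ℝ) : ℝ :=
  pt (pt φ) t s - α ^ 2 * ps (ps φ) t s + ps (fun t s => 1 / (ps φ t s) ^ 2) t s - deriv b (φ t s)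

noncomputable def smhdEnergy (t s : ℝ) : ℝ :=
  ((pt φ t s) ^ 2 + α ^ 2 * (ps φ t s) ^ 2) / 2 + 1 / ps φ t s - b (φ t s)

noncomputable def smhdFlux (t s : ℝ) : ℝ :=
  pt φ t s / (ps φ t s) ^ 2 - α ^ 2 * pt φ t s * ps φ t s

variable {α b φ} {t s : ℝ}

theorem hasDerivAt_smhdEnergy (hb : DifferentiableAt ℝ b (φ t s))
    (hφ : ContDiff ℝ 2 (uncurry φ)) (hv : ps φ t s ≠ 0) :
    HasDerivAt (fun t' => smhdEnergy α b φ t' s)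
      (pt φ t s * pt (pt φ) t s + α ^ 2 * ps φ t s * pt (ps φ) t s
        - pt (ps φ) t s / ps φ t s ^ 2 - deriv b (φ t s) * pt φ t s) t := by
  have hu := hasDerivAt_pt ((hφ.uncurry_pt le_rfl).differentiable one_ne_zero (t, s))
  have hv' := hasDerivAt_pt ((hφ.uncurry_ps le_rfl).differentiable one_ne_zero (t, s))
  have hbφ := hb.hasDerivAt.comp t (hasDerivAt_pt (hφ.differentiable two_ne_zero (t, s)))
  refine (((((hu.fun_pow 2).fun_add ((hv'.fun_pow 2).const_mul (α ^ 2))).div_const 2).fun_add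
    ((hasDerivAt_const t 1).fun_div hv' hv)).fun_sub hbφ).congr_deriv ?_
  field_simp
  ring

theorem hasDerivAt_smhdFlux (hφ : ContDiff ℝ 2 (uncurry φ)) (hv : ps φ t s ≠ 0) :
    HasDerivAt (fun s' => smhdFlux α φ t s')
      (ps (pt φ) t s / ps φ t s ^ 2 - 2 * pt φ t s * ps (ps φ) t s / ps φ t s ^ 3
        - α ^ 2 * (ps (pt φ) t s * ps φ t s + pt φ t s * ps (ps φ) t s)) s := by
  have hu := hasDerivAt_ps ((hφ.uncurry_pt le_rfl).differentiable one_ne_zero (t, s))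
  have hv' := hasDerivAt_ps ((hφ.uncurry_ps le_rfl).differentiable one_ne_zero (t, s))
  refine ((hu.fun_div (hv'.fun_pow 2) (pow_ne_zero 2 hv)).fun_sub
    ((hu.const_mul (α ^ 2)).fun_mul hv')).congr_deriv ?_
  field_simp
  ring

theorem hasDerivAt_inv_sq_ps (hφ : ContDiff ℝ 2 (uncurry φ)) (hv : ps φ t s ≠ 0) :
    HasDerivAt (fun s' => 1 / ps φ t s' ^ 2) (-2 * ps (ps φ) t s / ps φ t s ^ 3) s := by
  have hv' := hasDerivAt_ps ((hφ.uncurry_ps le_rfl).differentiable one_ne_zero (t, s))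
  refine ((hasDerivAt_const s 1).fun_div (hv'.fun_pow 2) (pow_ne_zero 2 hv)).congr_deriv ?_
  field_simp
  ring

theorem pt_smhdEnergy_add_ps_smhdFlux (hb : DifferentiableAt ℝ b (φ t s))
    (hφ : ContDiff ℝ 2 (uncurry φ)) (hv : ps φ t s ≠ 0) :
    pt (smhdEnergy α b φ) t s + ps (smhdFlux α φ) t s = pt φ t s * smhdResidual α b φ t s := by
  have hE : pt (smhdEnergy α b φ) t s = _ := (hasDerivAt_smhdEnergy hb hφ hv).deriv
  have hF : ps (smhdFlux α φ) t s = _ := (hasDerivAt_smhdFlux hφ hv).deriv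
  have hR : ps (fun t s => 1 / ps φ t s ^ 2) t s = _ := (hasDerivAt_inv_sq_ps hφ hv).deriv
  rw [hE, hF, smhdResidual, hR, pt_ps_eq_ps_pt hφ]
  ring

end SMHD

/-- energy conservation law for the 1D SMHD equation in
Lagrangian coordinates with arbitrary bottom topography. -/
theorem smhd_energy_conservation
    (α : ℝ) (b : ℝ → ℝ) (hb : ContDiff ℝ 1 b)
    (φ : ℝ → ℝ → ℝ)
    (hφ : ContDiff ℝ 2 (fun p : ℝ × ℝ => φ p.1 p.2))
    (hpos : ∀ t s, 0 < ps φ t s)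
    (hpde : ∀ t s,
      pt (pt φ) t s - α ^ 2 * ps (ps φ) t s
        + ps (fun t s => 1 / (ps φ t s) ^ 2) t s - deriv b (φ t s) = 0) :
    ∀ t s,
      pt (fun t s =>
          ((pt φ t s) ^ 2 + α ^ 2 * (ps φ t s) ^ 2) / 2
            + 1 / ps φ t s - b (φ t s)) t s
        + ps (fun t s =>
            pt φ t s / (ps φ t s) ^ 2 - α ^ 2 * pt φ t s * ps φ t s) t s = 0 := by
  intro t s
  calc _ = pt φ t s * smhdResidual α b φ t s :=
        pt_smhdEnergy_add_ps_smhdFlux (hb.differentiable one_ne_zero _) hφ (hpos t s).ne'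
    _ = 0 := by rw [smhdResidual, hpde, mul_zero]
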